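/- Let H₁ ⊆ 2^{V₁}, ..., H_p ⊆ 2^{V_p} be hypergraphs on pairwise disjoint vertex sets, and H = H₁ ⊞ ... ⊞ H_p their selective compound. Then for every position x = (x¹,...,x^p), the height of x in Nim on H equals h₁(x¹) + ... + h_p(x^p). -/

import Mathlib

/-!
Along any compound move every component height weakly drops and at least one strictly drops,
so the sum of the component heights bounds the compound height from above. Conversely, while
that sum is positive, a component move lowering its own height by exactly one lifts to a
compound move lowering the sum by exactly one, so the sum is also attained.
-/

/-- A move in hypergraph Nim: choose an edge `E ∈ H`, strictly decrease all
coordinates in `E`, leave all other coordinates unchanged. -/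
def Move {V : Type*} (H : Set (Set V)) (x x' : V → ℕ) : Prop :=
  ∃ E ∈ H, (∀ i ∈ E, x' i < x i) ∧ ∀ i ∉ E, x' i = x i

/-- The height of a position: the maximum number of consecutive moves from `x`. -/
noncomputable def height {V : Type*} (H : Set (Set V)) (x : V → ℕ) : ℕ :=
  sSup {n : ℕ | ∃ f : ℕ → V → ℕ, f 0 = x ∧ ∀ i < n, Move H (f i) (f (i + 1))}

/-- The selective compound of hypergraphs `H i ⊆ 2^{V i}` on pairwise disjoint
vertex sets, realized on the sigma type: all nonempty unions `⋃ i Hⁱ` with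
`Hⁱ ∈ H i ∪ {∅}`. -/
def SelCompound {p : ℕ} {V : Fin p → Type*} (H : ∀ i, Set (Set (V i))) :
    Set (Set (Σ i, V i)) :=
  {E | E ≠ ∅ ∧ ∃ f : ∀ i, Set (V i), (∀ i, f i ∈ H i ∨ f i = ∅) ∧
        E = ⋃ i, Sigma.mk i '' f i}

section Height

variable {V : Type*} {H : Set (Set V)}

def playLengths (H : Set (Set V)) (x : V → ℕ) : Set ℕ :=
  {n | ∃ f : ℕ → V → ℕ, f 0 = x ∧ ∀ i < n, Move H (f i) (f (i + 1))}

theorem zero_mem_playLengths (x : V → ℕ) : 0 ∈ playLengths H x :=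
  ⟨fun _ => x, rfl, fun _ h => absurd h (Nat.not_lt_zero _)⟩

theorem le_of_mem_playLengths {φ : (V → ℕ) → ℕ} (hφ : ∀ y z, Move H y z → φ z < φ y)
    {x : V → ℕ} {n : ℕ} (hn : n ∈ playLengths H x) : n ≤ φ x := by
  obtain ⟨f, rfl, hf⟩ := hn
  have key : ∀ k ≤ n, φ (f k) + k ≤ φ (f 0) := by
    intro k hk
    induction k with
    | zero => simp
    | succ k ih =>
      have := hφ _ _ (hf k hk)
      have := ih (by omega)
      omega
  have := key n le_rfl
  omega

theorem height_le_of_move_lt {φ : (V → ℕ) → ℕ} (hφ : ∀ y z, Move H y z → φ z < φ y)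
    (x : V → ℕ) : height H x ≤ φ x :=
  csSup_le ⟨0, zero_mem_playLengths x⟩ fun _ hn => le_of_mem_playLengths hφ hn

variable [Fintype V]

theorem Move.sum_lt (hne : ∅ ∉ H) {x y : V → ℕ} (h : Move H x y) : ∑ v, y v < ∑ v, x v := by
  obtain ⟨E, hE, hlt, heq⟩ := h
  obtain ⟨v₀, hv₀⟩ := Set.nonempty_iff_ne_empty.2 (ne_of_mem_of_not_mem hE hne)
  refine Finset.sum_lt_sum (fun v _ => ?_) ⟨v₀, Finset.mem_univ _, hlt v₀ hv₀⟩
  by_cases hv : v ∈ E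
  · exact (hlt v hv).le
  · exact (heq v hv).le

theorem bddAbove_playLengths (hne : ∅ ∉ H) (x : V → ℕ) : BddAbove (playLengths H x) :=
  ⟨∑ v, x v, fun _ hn => le_of_mem_playLengths (fun _ _ h => h.sum_lt hne) hn⟩

theorem height_mem_playLengths (hne : ∅ ∉ H) (x : V → ℕ) : height H x ∈ playLengths H x :=
  Nat.sSup_mem ⟨0, zero_mem_playLengths x⟩ (bddAbove_playLengths hne x)

theorem le_height (hne : ∅ ∉ H) {x : V → ℕ} {n : ℕ} (hn : n ∈ playLengths H x) :
    n ≤ height H x :=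
  le_csSup (bddAbove_playLengths hne x) hn

theorem Move.height_lt (hne : ∅ ∉ H) {x y : V → ℕ} (h : Move H x y) :
    height H y < height H x := by
  obtain ⟨f, hf0, hf⟩ := height_mem_playLengths hne y
  refine le_height hne ⟨fun k => if k = 0 then x else f (k - 1), rfl, fun i hi => ?_⟩
  cases i with
  | zero => simpa [hf0] using h
  | succ i => simpa using hf i (by omega)

theorem exists_move_height_le_succ (hne : ∅ ∉ H) {x : V → ℕ} (hx : 0 < height H x) :
    ∃ y, Move H x y ∧ height H x ≤ height H y + 1 := by
  obtain ⟨f, rfl, hf⟩ := height_mem_playLengths hne x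
  refine ⟨f 1, hf 0 hx, ?_⟩
  have : height H (f 0) - 1 ≤ height H (f 1) :=
    le_height hne ⟨fun k => f (k + 1), rfl, fun i hi => hf (i + 1) (by omega)⟩
  omega

theorem le_height_of_exists_move (hne : ∅ ∉ H) {ψ : (V → ℕ) → ℕ}
    (hψ : ∀ x, 0 < ψ x → ∃ y, Move H x y ∧ ψ x ≤ ψ y + 1) (x : V → ℕ) :
    ψ x ≤ height H x := by
  suffices ∀ n x, n ≤ ψ x → n ≤ height H x from this _ x le_rfl
  intro n
  induction n with
  | zero => exact fun _ _ => Nat.zero_le _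
  | succ n ih =>
    intro x hx
    obtain ⟨y, hxy, hψy⟩ := hψ x (by omega)
    have := ih y (by omega)
    have := hxy.height_lt hne
    omega

end Height

section SelCompound

variable {p : ℕ} {V : Fin p → Type*} {H : ∀ i, Set (Set (V i))}

theorem mem_selCompound_iff {E : Set (Σ i, V i)} :
    E ∈ SelCompound H ↔ E ≠ ∅ ∧ ∀ i, Sigma.mk i ⁻¹' E ∈ H i ∨ Sigma.mk i ⁻¹' E = ∅ := by
  refine and_congr_right fun _ =>
    ⟨?_, fun h => ⟨_, h, (Set.iUnion_image_preimage_sigma_mk_eq_self E).symm⟩⟩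
  rintro ⟨f, hf, rfl⟩ i
  have : Sigma.mk i ⁻¹' ⋃ j, Sigma.mk j '' f j = f i := by
    ext w
    simp only [Set.mem_preimage, Set.mem_iUnion, Set.mem_image, Sigma.mk.injEq]
    exact ⟨fun ⟨_, _, hv, rfl, h⟩ => eq_of_heq h ▸ hv, fun h => ⟨i, w, h, rfl, HEq.rfl⟩⟩
  simpa [this] using hf i

theorem empty_notMem_selCompound (H : ∀ i, Set (Set (V i))) : ∅ ∉ SelCompound H :=
  fun h => h.1 rfl

theorem Move.update_selCompound {i : Fin p} (hne : ∅ ∉ H i) {x : (Σ i, V i) → ℕ}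
    {z : V i → ℕ} (h : Move (H i) (fun w => x ⟨i, w⟩) z) :
    Move (SelCompound H) x (fun s => Function.update (fun j w => x ⟨j, w⟩) i z s.1 s.2) := by
  obtain ⟨E, hE, hlt, heq⟩ := h
  refine ⟨Sigma.mk i '' E, mem_selCompound_iff.2 ⟨?_, fun j => ?_⟩, ?_, ?_⟩
  · exact ((Set.nonempty_iff_ne_empty.2 (ne_of_mem_of_not_mem hE hne)).image _).ne_empty
  · by_cases hj : i = j
    · subst hj
      left
      rwa [sigma_mk_preimage_image_eq_self]
    · exact .inr (sigma_mk_preimage_image' hj)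
  · rintro _ ⟨w, hw, rfl⟩
    simpa using hlt w hw
  · rintro ⟨j, w⟩ hw
    by_cases hj : j = i
    · subst hj
      simpa using heq w fun h => hw ⟨w, h, rfl⟩
    · simp [Function.update_of_ne hj]

variable [∀ i, Fintype (V i)]

theorem sum_height_lt_of_move_selCompound (hne : ∀ i, ∅ ∉ H i) {x y : (Σ i, V i) → ℕ}
    (h : Move (SelCompound H) x y) :
    ∑ i, height (H i) (fun w => y ⟨i, w⟩) < ∑ i, height (H i) (fun w => x ⟨i, w⟩) := by
  obtain ⟨E, hE, hlt, heq⟩ := h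
  obtain ⟨hE₀, hEi⟩ := mem_selCompound_iff.1 hE
  have hcomp : ∀ i, Sigma.mk i ⁻¹' E ∈ H i →
      Move (H i) (fun w => x ⟨i, w⟩) (fun w => y ⟨i, w⟩) :=
    fun i hi => ⟨_, hi, fun w hw => hlt _ hw, fun w hw => heq _ hw⟩
  have hle : ∀ i, height (H i) (fun w => y ⟨i, w⟩) ≤ height (H i) (fun w => x ⟨i, w⟩) := by
    intro i
    rcases hEi i with hi | hi
    · exact ((hcomp i hi).height_lt (hne i)).le
    · have : (fun w => y ⟨i, w⟩) = fun w => x ⟨i, w⟩ :=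
        funext fun w => heq _ (Set.eq_empty_iff_forall_notMem.1 hi w)
      rw [this]
  obtain ⟨⟨i, w⟩, hw⟩ := Set.nonempty_iff_ne_empty.2 hE₀
  have hi : Sigma.mk i ⁻¹' E ∈ H i :=
    (hEi i).resolve_right (Set.nonempty_iff_ne_empty.1 ⟨w, hw⟩)
  exact Finset.sum_lt_sum (fun i _ => hle i) ⟨i, Finset.mem_univ _, (hcomp i hi).height_lt (hne i)⟩

theorem exists_move_selCompound_sum_height_le_succ (hne : ∀ i, ∅ ∉ H i) {x : (Σ i, V i) → ℕ}
    (hx : 0 < ∑ i, height (H i) (fun w => x ⟨i, w⟩)) :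
    ∃ y, Move (SelCompound H) x y ∧
      ∑ i, height (H i) (fun w => x ⟨i, w⟩) ≤ ∑ i, height (H i) (fun w => y ⟨i, w⟩) + 1 := by
  obtain ⟨i, -, hi⟩ := Finset.exists_ne_zero_of_sum_ne_zero hx.ne'
  obtain ⟨z, hz, hzh⟩ := exists_move_height_le_succ (hne i) (Nat.pos_of_ne_zero hi)
  refine ⟨_, hz.update_selCompound (hne i), ?_⟩
  have hsum : ∑ j, height (H j) (fun w => Function.update (fun j w => x ⟨j, w⟩) i z j w) =
      height (H i) z + ∑ j ∈ Finset.univ \ {i}, height (H j) (fun w => x ⟨j, w⟩) := by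
    rw [← Finset.sum_update_of_mem (Finset.mem_univ i)]
    refine Finset.sum_congr rfl fun j _ => ?_
    by_cases hj : j = i
    · subst hj
      simp
    · simp [hj]
  rw [hsum, Finset.sum_eq_add_sum_sdiff_singleton_of_mem (Finset.mem_univ i)]
  omega

end SelCompound

/-- The height of a position in the selective compound is the sum of the heights
of its components. -/
theorem stmt_14 {p : ℕ} {V : Fin p → Type*} [∀ i, Fintype (V i)]
    (H : ∀ i, Set (Set (V i))) (hne : ∀ i, ∅ ∉ H i) :
    ∀ x : (Σ i, V i) → ℕ,
      height (SelCompound H) x = ∑ i, height (H i) (fun w => x ⟨i, w⟩) := by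
  intro x
  apply le_antisymm
  · exact height_le_of_move_lt (fun _ _ h => sum_height_lt_of_move_selCompound hne h) x
  · exact le_height_of_exists_move (empty_notMem_selCompound H)
      (fun _ hy => exists_move_selCompound_sum_height_le_succ hne hy) x
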